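/- Let F(x) := ∫₀ˣ (1−t⁶)^{−1/2} dt and H(x) := ∫₀ˣ (1−t²)^{−5/6} dt. For every s ∈ [0,1] with 2H(s) ≤ H(1), one has F( 2s(1−s²)^{1/6} / √(9−8s²) ) = (2/3) · H(s). (This is the identity sin_{2,6}(2x/3) = 2 f(x)(1−f(x)²)^{1/6}/√(9−8f(x)²) with f = sin_{6/5,2}.) -/

import Mathlib

/-! Put `g s = 2s(1-s²)^{1/6}/√(9-8s²)` (the argument of `F` in the statement) and
`Q s = 27 - 36s² + 8s⁴`. Then `1 - (g s)⁶ = (Q s)² / (9-8s²)³`, and the chain rule gives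
`(F ∘ g)' = (2/3) H'` wherever `Q > 0`, that is on `[0, c)` with `c² = (9 - 3√3)/4` the least
positive zero of `Q`; hence `F (g s) = (2/3) H s` on `[0, c]`, and `g c = 1` gives
`F 1 = (2/3) H c`. The substitution `t = √(1 - y⁶)` makes `y ↦ H (√(1 - y⁶)) + 3 F y` constant on
`[0, 1]`, so `H 1 = 3 F 1 = 2 H c`, and since `H` is strictly increasing the hypothesis
`2 H s ≤ H 1` says exactly `s ≤ c`. -/

/-- `F = F_{2,6}`, the incomplete integral `∫₀ˣ (1−t⁶)^{−1/2} dt`. -/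
noncomputable def F26 (x : ℝ) : ℝ := ∫ t in (0:ℝ)..x, (1 - t ^ 6) ^ (-(1/2) : ℝ)

/-- `H = F_{6/5,2}`, the incomplete integral `∫₀ˣ (1−t²)^{−5/6} dt`. -/
noncomputable def H652 (x : ℝ) : ℝ := ∫ t in (0:ℝ)..x, (1 - t ^ 2) ^ (-(5/6) : ℝ)

open MeasureTheory Set Topology intervalIntegral

section Primitive

variable {n : ℕ} {r : ℝ}

lemma continuousOn_one_sub_pow_rpow (hn : n ≠ 0) (r : ℝ) :
    ContinuousOn (fun t : ℝ => (1 - t ^ n) ^ r) (Ioo (-1) 1) := by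
  refine (continuous_const.sub (continuous_pow n)).continuousOn.rpow_const fun t ht => Or.inl ?_
  have : |t ^ n| < 1 := by
    rw [abs_pow]; exact pow_lt_one₀ (abs_nonneg t) (abs_lt.2 ht) hn
  exact (sub_pos.2 (abs_lt.1 this).2).ne'

lemma intervalIntegrable_one_sub_pow_rpow (hn : n ≠ 0) (hr : -1 < r) (hr0 : r ≤ 0) :
    IntervalIntegrable (fun t : ℝ => (1 - t ^ n) ^ r) volume 0 1 := by
  have hdom : IntervalIntegrable (fun t : ℝ => (1 - t) ^ r) volume 0 1 := by
    simpa using ((intervalIntegrable_rpow' (a := 0) (b := 1) hr).comp_sub_left 1).symm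
  rw [intervalIntegrable_iff_integrableOn_Ioo_of_le zero_le_one] at hdom ⊢
  refine hdom.mono' (((continuousOn_one_sub_pow_rpow hn r).mono
    (Ioo_subset_Ioo_left (by norm_num))).aestronglyMeasurable measurableSet_Ioo) ?_
  filter_upwards [ae_restrict_mem measurableSet_Ioo] with t ⟨ht0, ht1⟩
  rw [Real.norm_of_nonneg (Real.rpow_nonneg (sub_nonneg.2 (pow_le_one₀ ht0.le ht1.le)) r)]
  exact Real.rpow_le_rpow_of_nonpos (sub_pos.2 ht1)
    (sub_le_sub_left (pow_le_of_le_one ht0.le ht1.le hn) 1) hr0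

lemma hasDerivAt_integral_one_sub_pow_rpow (hn : n ≠ 0) (r : ℝ) {y : ℝ} (hy : y ∈ Ioo (-1) 1) :
    HasDerivAt (fun x => ∫ t in (0:ℝ)..x, (1 - t ^ n) ^ r) ((1 - y ^ n) ^ r) y := by
  have hcont := continuousOn_one_sub_pow_rpow hn r
  have hmem : Ioo (-1 : ℝ) 1 ∈ 𝓝 y := Ioo_mem_nhds hy.1 hy.2
  exact integral_hasDerivAt_right
    (hcont.mono (ordConnected_Ioo.uIcc_subset (by norm_num) hy)).intervalIntegrable
    ⟨_, hmem, hcont.aestronglyMeasurable measurableSet_Ioo⟩ (hcont.continuousAt hmem)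

lemma continuousOn_integral_one_sub_pow_rpow (hn : n ≠ 0) (hr : -1 < r) (hr0 : r ≤ 0) :
    ContinuousOn (fun x => ∫ t in (0:ℝ)..x, (1 - t ^ n) ^ r) (Icc 0 1) := by
  simpa [uIcc_of_le zero_le_one] using continuousOn_primitive_interval'
    (intervalIntegrable_one_sub_pow_rpow hn hr hr0) left_mem_uIcc

lemma strictMonoOn_integral_one_sub_pow_rpow (hn : n ≠ 0) (hr : -1 < r) (hr0 : r ≤ 0) :
    StrictMonoOn (fun x => ∫ t in (0:ℝ)..x, (1 - t ^ n) ^ r) (Icc 0 1) := by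
  refine strictMonoOn_of_hasDerivWithinAt_pos (f' := fun x => (1 - x ^ n) ^ r) (convex_Icc 0 1)
    (continuousOn_integral_one_sub_pow_rpow hn hr hr0) (fun x hx => ?_) (fun x hx => ?_)
  all_goals rw [interior_Icc] at hx
  · exact (hasDerivAt_integral_one_sub_pow_rpow hn r ⟨by linarith [hx.1], hx.2⟩).hasDerivWithinAt
  · exact Real.rpow_pos_of_pos (sub_pos.2 (pow_lt_one₀ hx.1.le hx.2 hn)) r

end Primitive

lemma eq_of_continuousOn_of_hasDerivAt_zero {f : ℝ → ℝ} {a b : ℝ} (hab : a ≤ b)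
    (hf : ContinuousOn f (Icc a b)) (hf' : ∀ x ∈ Ioo a b, HasDerivAt f 0 x) : f a = f b := by
  rcases hab.eq_or_lt with rfl | hab
  · rfl
  obtain ⟨c, -, hc⟩ := exists_hasDerivAt_eq_slope f (fun _ => 0) hab hf hf'
  rw [eq_comm, div_eq_zero_iff, sub_eq_zero, sub_eq_zero] at hc
  exact (hc.resolve_right hab.ne').symm

lemma F26_zero : F26 0 = 0 := integral_same

lemma H652_zero : H652 0 = 0 := integral_same

lemma hasDerivAt_F26 {y : ℝ} (hy : y ∈ Ioo (-1) 1) :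
    HasDerivAt F26 ((1 - y ^ 6) ^ (-(1/2) : ℝ)) y :=
  hasDerivAt_integral_one_sub_pow_rpow (by norm_num) _ hy

lemma hasDerivAt_H652 {y : ℝ} (hy : y ∈ Ioo (-1) 1) :
    HasDerivAt H652 ((1 - y ^ 2) ^ (-(5/6) : ℝ)) y :=
  hasDerivAt_integral_one_sub_pow_rpow (by norm_num) _ hy

lemma continuousOn_F26 : ContinuousOn F26 (Icc 0 1) :=
  continuousOn_integral_one_sub_pow_rpow (by norm_num) (by norm_num) (by norm_num)

lemma continuousOn_H652 : ContinuousOn H652 (Icc 0 1) :=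
  continuousOn_integral_one_sub_pow_rpow (by norm_num) (by norm_num) (by norm_num)

lemma strictMonoOn_H652 : StrictMonoOn H652 (Icc 0 1) :=
  strictMonoOn_integral_one_sub_pow_rpow (by norm_num) (by norm_num) (by norm_num)

lemma rpow_neg_one_half {x : ℝ} (hx : 0 ≤ x) : x ^ (-(1/2) : ℝ) = (√x)⁻¹ := by
  rw [Real.rpow_neg hx, Real.sqrt_eq_rpow]

lemma hasDerivAt_H652_sqrt_add_three_mul_F26 {y : ℝ} (hy0 : 0 < y) (hy1 : y < 1) :
    HasDerivAt (fun y => H652 √(1 - y ^ 6) + 3 * F26 y) 0 y := by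
  have hy6 : y ^ 6 < 1 := pow_lt_one₀ hy0.le hy1 (by norm_num)
  have hw : 0 < 1 - y ^ 6 := by linarith
  have hsqrt_lt : √(1 - y ^ 6) < 1 := (Real.sqrt_lt' one_pos).2 (by nlinarith [pow_pos hy0 6])
  have hinner : HasDerivAt (fun y : ℝ => √(1 - y ^ 6)) (-(6 * y ^ 5) / (2 * √(1 - y ^ 6))) y := by
    refine HasDerivAt.sqrt ?_ hw.ne'
    simpa using (hasDerivAt_pow 6 y).const_sub 1
  have hsum := ((hasDerivAt_H652 ⟨by linarith [Real.sqrt_nonneg (1 - y ^ 6)], hsqrt_lt⟩).comp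
    y hinner).add ((hasDerivAt_F26 ⟨by linarith, hy1⟩).const_mul 3)
  refine hsum.congr_deriv ?_
  have hpow : (y ^ 6) ^ (-(5/6) : ℝ) * y ^ 5 = 1 := by
    rw [← Real.rpow_natCast y 6, ← Real.rpow_natCast y 5, ← Real.rpow_mul hy0.le,
      ← Real.rpow_add hy0]
    norm_num
  rw [Real.sq_sqrt hw.le, sub_sub_cancel, rpow_neg_one_half hw.le]
  field_simp
  linear_combination (-6) * hpow

lemma H652_one_eq_three_mul_F26_one : H652 1 = 3 * F26 1 := by
  have hmaps : MapsTo (fun y : ℝ => √(1 - y ^ 6)) (Icc 0 1) (Icc 0 1) := fun y hy =>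
    ⟨Real.sqrt_nonneg _, Real.sqrt_le_one.2 (by nlinarith [pow_nonneg hy.1 6])⟩
  have hcont : ContinuousOn (fun y => H652 √(1 - y ^ 6) + 3 * F26 y) (Icc 0 1) :=
    (continuousOn_H652.comp (by fun_prop) hmaps).add (continuousOn_const.mul continuousOn_F26)
  simpa [F26_zero, H652_zero] using eq_of_continuousOn_of_hasDerivAt_zero zero_le_one hcont
    fun y hy => hasDerivAt_H652_sqrt_add_three_mul_F26 hy.1 hy.2

noncomputable def gOfF (s : ℝ) : ℝ :=
  2 * s * (1 - s ^ 2) ^ ((1:ℝ)/6) / √(9 - 8 * s ^ 2)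

lemma continuousOn_gOfF : ContinuousOn gOfF (Icc 0 1) := by
  refine ContinuousOn.div (by fun_prop (disch := norm_num)) (by fun_prop) fun s hs => ?_
  have : 0 < 9 - 8 * s ^ 2 := by nlinarith [hs.1, hs.2]
  positivity

lemma one_sub_gOfF_pow_six {s : ℝ} (hs : s ^ 2 ≤ 1) :
    1 - gOfF s ^ 6 = (27 - 36 * s ^ 2 + 8 * s ^ 4) ^ 2 / (9 - 8 * s ^ 2) ^ 3 := by
  have hw : 0 < 9 - 8 * s ^ 2 := by linarith
  have hroot : ((1 - s ^ 2) ^ ((1:ℝ)/6)) ^ 6 = 1 - s ^ 2 := by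
    rw [← Real.rpow_natCast, ← Real.rpow_mul (by linarith)]
    norm_num
  have hsqrt : √(9 - 8 * s ^ 2) ^ 6 = (9 - 8 * s ^ 2) ^ 3 := by
    rw [show √(9 - 8 * s ^ 2) ^ 6 = (√(9 - 8 * s ^ 2) ^ 2) ^ 3 by ring, Real.sq_sqrt hw.le]
  have hw3 : (9 - 8 * s ^ 2) ^ 3 ≠ 0 := (pow_pos hw 3).ne'
  rw [gOfF, div_pow, mul_pow, mul_pow, hroot, hsqrt, eq_div_iff hw3, sub_mul,
    div_mul_cancel₀ _ hw3]
  ring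

lemma gOfF_mem_Icc {s : ℝ} (hs : s ∈ Icc (0:ℝ) 1) : gOfF s ∈ Icc 0 1 := by
  have hs0 := hs.1
  have hu : 0 ≤ 1 - s ^ 2 := by nlinarith [hs.2]
  have hg : 0 ≤ gOfF s := by unfold gOfF; positivity
  refine ⟨hg, (pow_le_one_iff_of_nonneg hg (n := 6) (by norm_num)).1 ?_⟩
  have := one_sub_gOfF_pow_six (s := s) (by linarith)
  have : 0 ≤ (27 - 36 * s ^ 2 + 8 * s ^ 4) ^ 2 / (9 - 8 * s ^ 2) ^ 3 := by
    have : 0 < 9 - 8 * s ^ 2 := by linarith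
    positivity
  linarith

lemma hasDerivAt_gOfF {s : ℝ} (hs : s ^ 2 < 1) :
    HasDerivAt gOfF (2 * (27 - 36 * s ^ 2 + 8 * s ^ 4) * (1 - s ^ 2) ^ (-(5/6) : ℝ)
      / (3 * (9 - 8 * s ^ 2) * √(9 - 8 * s ^ 2))) s := by
  have hu : 0 < 1 - s ^ 2 := by linarith
  have hw : 0 < 9 - 8 * s ^ 2 := by linarith
  have hroot : HasDerivAt (fun s : ℝ => (1 - s ^ 2) ^ ((1:ℝ)/6))
      ((1/6) * (1 - s ^ 2) ^ ((1:ℝ)/6 - 1) * -(2 * s)) s := by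
    convert ((hasDerivAt_pow 2 s).const_sub 1).rpow_const (p := (1:ℝ)/6) (Or.inl hu.ne') using 1
    push_cast
    ring
  have hsqrt : HasDerivAt (fun s : ℝ => √(9 - 8 * s ^ 2)) (-(16 * s) / (2 * √(9 - 8 * s ^ 2))) s := by
    refine HasDerivAt.sqrt ((((hasDerivAt_pow 2 s).const_mul 8).const_sub 9).congr_deriv ?_) hw.ne'
    norm_num
    ring
  have hquot := (((hasDerivAt_id' s).const_mul 2).mul hroot).div hsqrt (Real.sqrt_pos.2 hw).ne'
  refine hquot.congr_deriv ?_
  have hsplit : (1 - s ^ 2) ^ ((1:ℝ)/6) = (1 - s ^ 2) * (1 - s ^ 2) ^ (-(5/6) : ℝ) := by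
    rw [← Real.rpow_one_add' hu.le (by norm_num)]
    norm_num
  have hb := Real.sq_sqrt hw.le
  set b := √(9 - 8 * s ^ 2)
  have hb0 : b ≠ 0 := (Real.sqrt_pos.2 hw).ne'
  simp only [Pi.mul_apply]
  rw [show (1:ℝ)/6 - 1 = -(5/6) by norm_num, hsplit, ← hb]
  field_simp
  linear_combination (36 - 48 * s ^ 2) * hb

lemma hasDerivAt_F26_comp_gOfF {s : ℝ} (hs0 : 0 ≤ s) (hs1 : s < 1)
    (hQ : 0 < 27 - 36 * s ^ 2 + 8 * s ^ 4) :
    HasDerivAt (fun x => F26 (gOfF x)) (2/3 * (1 - s ^ 2) ^ (-(5/6) : ℝ)) s := by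
  have hs2 : s ^ 2 < 1 := by nlinarith
  have hw : 0 < 9 - 8 * s ^ 2 := by linarith
  have hb := Real.sq_sqrt hw.le
  have hgap := one_sub_gOfF_pow_six hs2.le
  have hg := gOfF_mem_Icc ⟨hs0, hs1.le⟩
  have hg1 : gOfF s < 1 := by
    refine (pow_lt_one_iff_of_nonneg hg.1 (n := 6) (by norm_num)).1 ?_
    have : 0 < (27 - 36 * s ^ 2 + 8 * s ^ 4) ^ 2 / (9 - 8 * s ^ 2) ^ 3 := by positivity
    linarith
  have hF' : (1 - gOfF s ^ 6) ^ (-(1/2) : ℝ)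
      = (9 - 8 * s ^ 2) * √(9 - 8 * s ^ 2) / (27 - 36 * s ^ 2 + 8 * s ^ 4) := by
    have hsq : (27 - 36 * s ^ 2 + 8 * s ^ 4) ^ 2 / (9 - 8 * s ^ 2) ^ 3
        = ((27 - 36 * s ^ 2 + 8 * s ^ 4) / ((9 - 8 * s ^ 2) * √(9 - 8 * s ^ 2))) ^ 2 := by
      rw [div_pow, mul_pow, hb]; ring
    rw [hgap, rpow_neg_one_half (by positivity), hsq, Real.sqrt_sq (by positivity), inv_div]
  refine ((hasDerivAt_F26 ⟨by linarith [hg.1], hg1⟩).comp s (hasDerivAt_gOfF hs2)).congr_deriv ?_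
  rw [hF']
  generalize 27 - 36 * s ^ 2 + 8 * s ^ 4 = Q at hQ ⊢
  field_simp

noncomputable def sCrit : ℝ := √((9 - 3 * √3) / 4)

lemma sCrit_sq : sCrit ^ 2 = (9 - 3 * √3) / 4 :=
  Real.sq_sqrt (by nlinarith [Real.sq_sqrt (show (0:ℝ) ≤ 3 by norm_num), Real.sqrt_nonneg 3])

lemma sCrit_mem_Ioo : sCrit ∈ Ioo 0 1 := by
  have h3 := Real.sq_sqrt (show (0:ℝ) ≤ 3 by norm_num)
  have h3' := Real.sqrt_nonneg 3
  exact ⟨Real.sqrt_pos.2 (by nlinarith), (Real.sqrt_lt' one_pos).2 (by nlinarith)⟩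

lemma quartic_eq_mul_sCrit (s : ℝ) :
    27 - 36 * s ^ 2 + 8 * s ^ 4 = 8 * (s ^ 2 - sCrit ^ 2) * (s ^ 2 - (9 + 3 * √3) / 4) := by
  rw [sCrit_sq]
  linear_combination (9/2) * Real.sq_sqrt (show (0:ℝ) ≤ 3 by norm_num)

lemma quartic_pos_of_lt_sCrit {s : ℝ} (hs0 : 0 ≤ s) (hs : s < sCrit) :
    0 < 27 - 36 * s ^ 2 + 8 * s ^ 4 := by
  have hlt : s ^ 2 < sCrit ^ 2 := pow_lt_pow_left₀ hs hs0 (by norm_num)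
  have hc : sCrit ^ 2 < (9 + 3 * √3) / 4 := by
    rw [sCrit_sq]; linarith [Real.sqrt_pos.2 (show (0:ℝ) < 3 by norm_num)]
  rw [quartic_eq_mul_sCrit]
  nlinarith

lemma gOfF_sCrit : gOfF sCrit = 1 := by
  have hc := sCrit_mem_Ioo
  have h := one_sub_gOfF_pow_six (s := sCrit) (by nlinarith [hc.1, hc.2])
  rw [quartic_eq_mul_sCrit, sub_self, mul_zero, zero_mul, zero_pow two_ne_zero, zero_div,
    sub_eq_zero, eq_comm] at h
  exact (pow_eq_one_iff_of_nonneg (gOfF_mem_Icc ⟨hc.1.le, hc.2.le⟩).1 (by norm_num)).1 h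

lemma F26_gOfF {s : ℝ} (hs : s ∈ Icc 0 sCrit) : F26 (gOfF s) = 2/3 * H652 s := by
  have hc := sCrit_mem_Ioo
  have hcont : ContinuousOn (fun x => F26 (gOfF x) - 2/3 * H652 x) (Icc 0 s) :=
    ((continuousOn_F26.comp continuousOn_gOfF fun x hx => gOfF_mem_Icc hx).sub
      (continuousOn_const.mul continuousOn_H652)).mono (Icc_subset_Icc_right (hs.2.trans hc.2.le))
  have hderiv : ∀ x ∈ Ioo 0 s, HasDerivAt (fun x => F26 (gOfF x) - 2/3 * H652 x) 0 x := by
    intro x ⟨hx0, hxs⟩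
    have hxc : x < sCrit := hxs.trans_le hs.2
    have h := (hasDerivAt_F26_comp_gOfF hx0.le (hxc.trans hc.2)
      (quartic_pos_of_lt_sCrit hx0.le hxc)).sub
      ((hasDerivAt_H652 ⟨by linarith, hxc.trans hc.2⟩).const_mul (2/3))
    rwa [sub_self] at h
  have h0 : gOfF 0 = 0 := by simp [gOfF]
  have := eq_of_continuousOn_of_hasDerivAt_zero hs.1 hcont hderiv
  rw [h0, F26_zero, H652_zero] at this
  linarith

/-- The identity `sin_{2,6}(2x/3) = 2 f(x)(1−f(x)²)^{1/6}/√(9−8f(x)²)` with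
`f = sin_{6/5,2}`, expressed via the integrals. -/
theorem g_in_terms_of_f (s : ℝ) (hs : s ∈ Set.Icc (0:ℝ) 1) (h : 2 * H652 s ≤ H652 1) :
    F26 (2 * s * (1 - s ^ 2) ^ ((1:ℝ)/6) / Real.sqrt (9 - 8 * s ^ 2))
      = (2/3) * H652 s := by
  have hc := sCrit_mem_Ioo
  have hH1 : H652 1 = 2 * H652 sCrit := by
    have := F26_gOfF ⟨hc.1.le, le_rfl⟩
    rw [gOfF_sCrit] at this
    linarith [H652_one_eq_three_mul_F26_one]
  have hle : s ≤ sCrit := (strictMonoOn_H652.le_iff_le hs ⟨hc.1.le, hc.2.le⟩).1 (by linarith)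
  exact F26_gOfF ⟨hs.1, hle⟩
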